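/- Generalized Picone identity (pointwise form): Let d ≥ 1 and let 1 < p < ∞ be a real number. Let u, v : ℝ^d → ℝ be functions, let x ∈ ℝ^d, and suppose u and v are differentiable at x, u is nonnegative on a neighborhood of x, and v is positive on a neighborhood of x. Then |∇u(x)|^p − ∇(u^p / v^{p−1})(x) · (|∇v(x)|^{p−2} ∇v(x)) = |∇u(x)|^p + (p−1) (u(x)/v(x))^p |∇v(x)|^p − p (u(x)/v(x))^{p−1} |∇v(x)|^{p−2} (∇u(x) · ∇v(x)), where for p < 2 the expression |η|^{p−2} η (and likewise |η|^{p−2}(ξ·η)) is interpreted as 0 when η = 0. -/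

import Mathlib

open MeasureTheory Filter
open scoped RealInnerProductSpace Topology

noncomputable section

/-- Euclidean space `ℝ^d`. -/
abbrev Euc (d : ℕ) := EuclideanSpace ℝ (Fin d)

/-- A test function on `Ω`: smooth with compact support contained in `Ω`. -/
def IsTestFun {d : ℕ} (Ω : Set (Euc d)) (u : Euc d → ℝ) : Prop :=
  ContDiff ℝ (⊤ : ℕ∞) u ∧ HasCompactSupport u ∧ tsupport u ⊆ Ω

/-- The energy functional `Q(u) = ∫_Ω (|∇u|^p + V |u|^p) dx`. -/
def energyQ {d : ℕ} (Ω : Set (Euc d)) (V : Euc d → ℝ) (p : ℝ) (u : Euc d → ℝ) : ℝ :=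
  ∫ x in Ω, (‖gradient u x‖ ^ p + V x * |u x| ^ p)

/-- `V` is measurable and bounded on every compact subset of `Ω`. -/
def LocBddPotential {d : ℕ} (Ω : Set (Euc d)) (V : Euc d → ℝ) : Prop :=
  Measurable V ∧ ∀ K : Set (Euc d), K ⊆ Ω → IsCompact K → ∃ C : ℝ, ∀ x ∈ K, |V x| ≤ C

/-- A positive supersolution of `Q'(u) = 0` in `Ω`. -/
def IsPositiveSupersolution {d : ℕ} (Ω : Set (Euc d)) (V : Euc d → ℝ) (p : ℝ)
    (v : Euc d → ℝ) : Prop :=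
  ContDiffOn ℝ 1 v Ω ∧ (∀ x ∈ Ω, 0 < v x) ∧
    ∀ φ : Euc d → ℝ, IsTestFun Ω φ → (∀ x, 0 ≤ φ x) →
      0 ≤ ∫ x in Ω, (‖gradient v x‖ ^ (p - 2) * ⟪gradient v x, gradient φ x⟫
            + V x * v x ^ (p - 1) * φ x)

/-- A positive (weak) solution of `Q'(u) = 0` in `Ω`. -/
def IsPositiveSolution {d : ℕ} (Ω : Set (Euc d)) (V : Euc d → ℝ) (p : ℝ)
    (v : Euc d → ℝ) : Prop :=
  ContDiffOn ℝ 1 v Ω ∧ (∀ x ∈ Ω, 0 < v x) ∧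
    ∀ φ : Euc d → ℝ, IsTestFun Ω φ →
      (∫ x in Ω, (‖gradient v x‖ ^ (p - 2) * ⟪gradient v x, gradient φ x⟫
            + V x * v x ^ (p - 1) * φ x)) = 0

/-- A null sequence for the functional `Q`. -/
def IsNullSequence {d : ℕ} (Ω : Set (Euc d)) (V : Euc d → ℝ) (p : ℝ)
    (u : ℕ → Euc d → ℝ) : Prop :=
  (∀ k, IsTestFun Ω (u k)) ∧ (∀ k x, 0 ≤ u k x) ∧
    ∃ B : Set (Euc d), IsOpen B ∧ IsCompact (closure B) ∧ closure B ⊆ Ω ∧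
      (∀ k, (∫ x in B, u k x ^ p) = 1) ∧
      Tendsto (fun k => energyQ Ω V p (u k)) atTop (𝓝 0)

/-- A ground state of `Q`: a positive `C¹` function on `Ω` which is the limit in
`L^p_loc(Ω)` of a null sequence. -/
def IsGroundState {d : ℕ} (Ω : Set (Euc d)) (V : Euc d → ℝ) (p : ℝ)
    (v : Euc d → ℝ) : Prop :=
  ContDiffOn ℝ 1 v Ω ∧ (∀ x ∈ Ω, 0 < v x) ∧
    ∃ u : ℕ → Euc d → ℝ, IsNullSequence Ω V p u ∧
      ∀ K : Set (Euc d), K ⊆ Ω → IsCompact K →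
        Tendsto (fun k => ∫ x in K, |u k x - v x| ^ p) atTop (𝓝 0)

/-- `Q` has a weighted spectral gap (is strictly positive) in `Ω`. -/
def HasSpectralGap {d : ℕ} (Ω : Set (Euc d)) (V : Euc d → ℝ) (p : ℝ) : Prop :=
  ∃ W : Euc d → ℝ, ContinuousOn W Ω ∧ (∀ x ∈ Ω, 0 < W x) ∧
    ∀ u : Euc d → ℝ, IsTestFun Ω u → (∫ x in Ω, W x * |u x| ^ p) ≤ energyQ Ω V p u

/-- `c_B`: the infimum of `Q(u)` over test functions with `∫_B |u|^p = 1`. -/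
def cB {d : ℕ} (Ω B : Set (Euc d)) (V : Euc d → ℝ) (p : ℝ) : ℝ :=
  sInf { q : ℝ | ∃ u : Euc d → ℝ, IsTestFun Ω u ∧ (∫ x in B, |u x| ^ p) = 1 ∧
    q = energyQ Ω V p u }

/-- The Picone Lagrangian `L(u,v)`. -/
def piconeL {d : ℕ} (p : ℝ) (u v : Euc d → ℝ) (x : Euc d) : ℝ :=
  ‖gradient u x‖ ^ p + (p - 1) * (u x / v x) ^ p * ‖gradient v x‖ ^ p
    - p * (u x / v x) ^ (p - 1) *
        (‖gradient v x‖ ^ (p - 2) * ⟪gradient u x, gradient v x⟫)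

/-- **Generalized Picone identity (pointwise form).** -/
theorem picone_identity {d : ℕ} (hd : 1 ≤ d) {p : ℝ} (hp₁ : 1 < p)
    (u v : Euc d → ℝ) (x : Euc d)
    (hu : DifferentiableAt ℝ u x) (hv : DifferentiableAt ℝ v x)
    (hu0 : ∀ᶠ y in 𝓝 x, 0 ≤ u y) (hv0 : ∀ᶠ y in 𝓝 x, 0 < v y) :
    ‖gradient u x‖ ^ p
        - ⟪gradient (fun y => u y ^ p / v y ^ (p - 1)) x,
            ‖gradient v x‖ ^ (p - 2) • gradient v x⟫
      = ‖gradient u x‖ ^ p + (p - 1) * (u x / v x) ^ p * ‖gradient v x‖ ^ p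
        - p * (u x / v x) ^ (p - 1) *
            (‖gradient v x‖ ^ (p - 2) * ⟪gradient u x, gradient v x⟫) := by
  have ha : 0 ≤ u x := hu0.self_of_nhds
  have hb : 0 < v x := hv0.self_of_nhds
  have hbp : (0:ℝ) < v x ^ (p - 1) := Real.rpow_pos_of_pos hb _
  -- fderiv of the numerator
  have hA : HasFDerivAt (fun y => u y ^ p)
      ((p * u x ^ (p - 1)) • fderiv ℝ u x) x :=
    hu.hasFDerivAt.rpow_const (Or.inr hp₁.le)
  -- fderiv of v ^ (p-1)
  have hB : HasFDerivAt (fun y => v y ^ (p - 1))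
      (((p - 1) * v x ^ (p - 2)) • fderiv ℝ v x) x := by
    have h := hv.hasFDerivAt.rpow_const (p := p - 1) (Or.inl hb.ne')
    have : p - 1 - 1 = p - 2 := by ring
    rwa [this] at h
  -- fderiv of (v ^ (p-1))⁻¹
  have hBinv : HasFDerivAt (fun y => (v y ^ (p - 1))⁻¹)
      ((-((v x ^ (p - 1)) ^ 2)⁻¹) • (((p - 1) * v x ^ (p - 2)) • fderiv ℝ v x)) x :=
    (hasDerivAt_inv hbp.ne').comp_hasFDerivAt x hB
  have hF : HasFDerivAt (fun y => u y ^ p / v y ^ (p - 1))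
      (u x ^ p • ((-((v x ^ (p - 1)) ^ 2)⁻¹) • (((p - 1) * v x ^ (p - 2)) • fderiv ℝ v x))
        + (v x ^ (p - 1))⁻¹ • ((p * u x ^ (p - 1)) • fderiv ℝ u x)) x := by
    exact (hA.mul hBinv).congr_of_eventuallyEq (Filter.Eventually.of_forall fun y => div_eq_mul_inv _ _)
  have key : ∀ (f : Euc d → ℝ) (w : Euc d), ⟪gradient f x, w⟫ = fderiv ℝ f x w := by
    intro f w
    rw [gradient, InnerProductSpace.toDual_symm_apply]
  rw [key, hF.fderiv]
  have hu' : ∀ w, fderiv ℝ u x w = ⟪gradient u x, w⟫ := fun w => (key u w).symm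
  have hv' : ∀ w, fderiv ℝ v x w = ⟪gradient v x, w⟫ := fun w => (key v w).symm
  simp only [ContinuousLinearMap.add_apply, ContinuousLinearMap.coe_smul',
    Pi.smul_apply, smul_eq_mul, _root_.map_smul, hu', hv']
  rw [real_inner_self_eq_norm_sq]
  set a := u x
  set b := v x
  set G := ‖gradient v x‖
  set s := ⟪gradient u x, gradient v x⟫
  have hG : 0 ≤ G := norm_nonneg _
  rcases eq_or_lt_of_le hG with hG0 | hG0
  · have : gradient v x = 0 := by
      simpa [G] using (norm_eq_zero.mp hG0.symm)
    have hs : s = 0 := by simp only [s, this, inner_zero_right]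
    rw [← hG0] at *
    have hGp : (0:ℝ) ^ p = 0 := Real.zero_rpow (by positivity)
    simp [hs, hGp]
  · -- G > 0
    have hdiv1 : (a / b) ^ p = a ^ p / b ^ p := Real.div_rpow ha hb.le p
    have hdiv2 : (a / b) ^ (p - 1) = a ^ (p - 1) / b ^ (p - 1) := Real.div_rpow ha hb.le _
    have hGsq : G ^ (p - 2) * G ^ (2:ℕ) = G ^ p := by
      rw [← Real.rpow_natCast G 2, ← Real.rpow_add hG0]
      norm_num
    have hb1 : b ^ (p - 2) * b ^ (2:ℝ) = b ^ p := by
      rw [← Real.rpow_add hb]; norm_num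
    have hb2 : (b ^ (p - 1)) * (b ^ (p-1)) = b ^ p * b ^ (p - 2) := by
      rw [← Real.rpow_add hb, ← Real.rpow_add hb]; ring_nf
    have hbpne : b ^ (p - 1) ≠ 0 := hbp.ne'
    have hbppne : b ^ p ≠ 0 := (Real.rpow_pos_of_pos hb p).ne'
    have hbp2ne : b ^ (p - 2) ≠ 0 := (Real.rpow_pos_of_pos hb _).ne'
    rw [hdiv1, hdiv2]
    field_simp
    linear_combination ((p-1) * a ^ p * b ^ (p-2) * b ^ p) * hGsq
      - ((p-1) * a ^ p * G ^ p) * hb2
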